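/- Fix d ≥ 1 and s < −1/d. Then the s-concave maximum likelihood estimator does not exist: for any observed points X_1,…,X_n ∈ ℝ^d, sup_{p ∈ P_s} Π_{i=1}^n p(X_i) = +∞. In particular, for a ∈ ℝ^d and b > 0 the functions p_{a,b}(x) ≡ ‖x−a‖^{1/s} 1_{‖x−a‖ ≤ b} / c_b (with c_b = ∫_{‖x‖≤b} ‖x‖^{1/s} dx < ∞) are s-concave densities, and the log-likelihood ℓ(a,b) = Σ_{i=1}^n log p_{a,b}(X_i) tends to +∞ as b is large and a approaches any X_i. -/

import Mathlib

open MeasureTheory ProbabilityTheory Real Filter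

noncomputable section

/-- The generalized mean `M_s(a, b; θ)`. -/
def Ms (s a b θ : ℝ) : ℝ :=
  if s = 0 then a ^ (1 - θ) * b ^ θ
  else if s < 0 ∧ (a = 0 ∨ b = 0) then 0
  else ((1 - θ) * a ^ s + θ * b ^ s) ^ (1 / s)

/-- `p` is an `s`-concave probability density on `ℝ^d`. -/
def IsSConcaveDensity (d : ℕ) (s : ℝ) (p : (Fin d → ℝ) → ℝ) : Prop :=
  (∀ x, 0 ≤ p x) ∧ Measurable p ∧ (∫ x, p x) = 1 ∧
    ∀ x₀ x₁ : Fin d → ℝ, ∀ θ ∈ Set.Ioo (0 : ℝ) 1,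
      Ms s (p x₀) (p x₁) θ ≤ p ((1 - θ) • x₀ + θ • x₁)

/-!
For `r = 1 / s ∈ (-d, 0)` the profile `‖x - a‖ ^ r` on a ball around `a` is `s`-concave (its
`s`-th power `‖x - a‖` is convex) and integrable, but infinite at `a`, which a real-valued
density cannot be. Truncating it to `max ‖x - a‖ ε ^ r` keeps `s`-concavity, and the
normalising integral stays below the integral `C` of the untruncated profile. Taking `a` to be an observation and the ball large enough to contain
all observations, the normalised density is at least `C⁻¹ * ε ^ r` at `a` and at least
`C⁻¹ * b ^ r` at every observation, so the likelihood tends to `∞` as `ε → 0`.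
-/

open Set Metric Topology

section GeneralizedMean

variable {s : ℝ}

lemma Ms_mul_rpow_one_div (hs : s < 0) {c u v θ : ℝ} (hc : 0 < c) (hu : 0 < u) (hv : 0 < v)
    (hθ₀ : 0 ≤ θ) (hθ₁ : θ ≤ 1) :
    Ms s (c * u ^ (1 / s)) (c * v ^ (1 / s)) θ = c * ((1 - θ) * u + θ * v) ^ (1 / s) := by
  have hpow : ∀ {w : ℝ}, 0 < w → (c * w ^ (1 / s)) ^ s = c ^ s * w := fun hw => by
    rw [mul_rpow hc.le (by positivity), ← rpow_mul hw.le, one_div_mul_cancel hs.ne, rpow_one]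
  have hW : 0 ≤ (1 - θ) * u + θ * v := by nlinarith
  have hu' : 0 < c * u ^ (1 / s) := by positivity
  have hv' : 0 < c * v ^ (1 / s) := by positivity
  rw [Ms, if_neg hs.ne, if_neg (by rintro ⟨-, h | h⟩; exacts [hu'.ne' h, hv'.ne' h]), hpow hu,
    hpow hv, show (1 - θ) * (c ^ s * u) + θ * (c ^ s * v) = c ^ s * ((1 - θ) * u + θ * v) by ring,
    mul_rpow (by positivity) hW, ← rpow_mul hc.le, mul_one_div_cancel hs.ne, rpow_one]

lemma Ms_indicator_rpow_le {E : Type*} [AddCommGroup E] [Module ℝ E] (hs : s < 0) {K : Set E}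
    {φ : E → ℝ} (hφ : ConvexOn ℝ K φ) (hφ_pos : ∀ x ∈ K, 0 < φ x) {c : ℝ} (hc : 0 < c)
    (x₀ x₁ : E) {θ : ℝ} (hθ : θ ∈ Ioo 0 1) :
    Ms s (c * K.indicator (fun x => φ x ^ (1 / s)) x₀) (c * K.indicator (fun x => φ x ^ (1 / s)) x₁) θ
      ≤ c * K.indicator (fun x => φ x ^ (1 / s)) ((1 - θ) • x₀ + θ • x₁) := by
  obtain ⟨hθ₀, hθ₁⟩ := hθ
  by_cases hx : x₀ ∈ K ∧ x₁ ∈ K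
  · obtain ⟨hx₀, hx₁⟩ := hx
    have hmid : (1 - θ) • x₀ + θ • x₁ ∈ K := hφ.1 hx₀ hx₁ (by linarith) hθ₀.le (by ring)
    rw [indicator_of_mem hx₀, indicator_of_mem hx₁, indicator_of_mem hmid,
      Ms_mul_rpow_one_div hs hc (hφ_pos _ hx₀) (hφ_pos _ hx₁) hθ₀.le hθ₁.le]
    refine mul_le_mul_of_nonneg_left (rpow_le_rpow_of_nonpos (hφ_pos _ hmid) ?_
      (one_div_neg.2 hs).le) hc.le
    simpa using hφ.2 hx₀ hx₁ (by linarith) hθ₀.le (by ring)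
  · have hzero : c * K.indicator (fun x => φ x ^ (1 / s)) x₀ = 0 ∨
        c * K.indicator (fun x => φ x ^ (1 / s)) x₁ = 0 := by
      rcases not_and_or.1 hx with hx | hx
      · exact .inl (by rw [indicator_of_notMem hx, mul_zero])
      · exact .inr (by rw [indicator_of_notMem hx, mul_zero])
    rw [Ms, if_neg hs.ne, if_pos ⟨hs, hzero⟩]
    exact mul_nonneg hc.le (indicator_nonneg (fun x hx => (rpow_pos_of_pos (hφ_pos x hx) _).le) _)

end GeneralizedMean

def normalizedPowerDensity {E : Type*} [MeasurableSpace E] (μ : Measure E) (K : Set E)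
    (φ : E → ℝ) (r : ℝ) (x : E) : ℝ :=
  (∫ y in K, φ y ^ r ∂μ)⁻¹ * K.indicator (fun y => φ y ^ r) x

lemma isSConcaveDensity_normalizedPowerDensity {d : ℕ} {s : ℝ} (hs : s < 0)
    {K : Set (Fin d → ℝ)} (hK : MeasurableSet K) {φ : (Fin d → ℝ) → ℝ} (hφ : ConvexOn ℝ K φ)
    (hφ_pos : ∀ x ∈ K, 0 < φ x) (hφ_meas : Measurable φ)
    (hint : 0 < ∫ y in K, φ y ^ (1 / s)) :
    IsSConcaveDensity d s (normalizedPowerDensity volume K φ (1 / s)) := by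
  refine ⟨fun x => ?_, ?_, ?_, fun x₀ x₁ θ hθ => ?_⟩
  · exact mul_nonneg (inv_nonneg.2 hint.le)
      (indicator_nonneg (fun y hy => (rpow_pos_of_pos (hφ_pos y hy) _).le) x)
  · exact ((hφ_meas.pow_const _).indicator hK).const_mul _
  · simp only [normalizedPowerDensity]
    rw [integral_const_mul, integral_indicator hK, inv_mul_cancel₀ hint.ne']
  · exact Ms_indicator_rpow_le hs hφ hφ_pos (inv_pos.2 hint) x₀ x₁ hθ

lemma mul_pow_card_sub_one_le_prod {ι : Type*} [Fintype ι] {f : ι → ℝ} {c c₀ : ℝ} (hc : 0 ≤ c)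
    (hf : ∀ i, c ≤ f i) (i₀ : ι) (hi₀ : c₀ ≤ f i₀) :
    c₀ * c ^ (Fintype.card ι - 1) ≤ ∏ i, f i := by
  classical
  rw [← Finset.mul_prod_erase _ f (Finset.mem_univ i₀)]
  have hrest : c ^ (Fintype.card ι - 1) ≤ ∏ i ∈ Finset.univ.erase i₀, f i := by
    calc c ^ (Fintype.card ι - 1) = ∏ _i ∈ Finset.univ.erase i₀, c := by
          rw [Finset.prod_const, Finset.card_erase_of_mem (Finset.mem_univ i₀), Finset.card_univ]
      _ ≤ ∏ i ∈ Finset.univ.erase i₀, f i := Finset.prod_le_prod (fun _ _ => hc) fun i _ => hf i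
  exact mul_le_mul hi₀ hrest (pow_nonneg hc _) (hc.trans (hf i₀))

section TruncatedRadialPower

variable {E : Type*} [NormedAddCommGroup E] [NormedSpace ℝ E] [FiniteDimensional ℝ E]
  [MeasurableSpace E] [BorelSpace E] {μ : Measure E} [μ.IsAddHaarMeasure]

lemma integrableOn_closedBall_norm_sub_rpow (hE : 1 ≤ Module.finrank ℝ E) {r : ℝ}
    (hr : -(Module.finrank ℝ E : ℝ) < r) (a : E) (b : ℝ) :
    IntegrableOn (fun x => ‖x - a‖ ^ r) (closedBall a b) μ := by
  have hloc : LocallyIntegrable (fun x : E => ‖x‖ ^ r) μ :=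
    locallyIntegrable_of_norm_le_rpow (C := 1) (α := -r) hE (by linarith)
      (.of_forall fun x => by simp [abs_of_nonneg (rpow_nonneg (norm_nonneg x) r)])
      (continuous_norm.measurable.pow_const r).aestronglyMeasurable
  have hpre : (fun x => x - a) ⁻¹' closedBall 0 b = closedBall a b := by
    ext x; simp [dist_eq_norm]
  rw [← hpre]
  exact ((measurePreserving_sub_right μ a).integrableOn_comp_preimage
    (measurableEmbedding_subRight a)).2 (hloc.integrableOn_isCompact (isCompact_closedBall 0 b))

lemma integrableOn_closedBall_max_norm_sub_rpow {ε : ℝ} (hε : 0 < ε) (r : ℝ) (a : E) (b : ℝ) :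
    IntegrableOn (fun x => max ‖x - a‖ ε ^ r) (closedBall a b) μ :=
  ((continuous_norm.comp (continuous_sub_right a)).max continuous_const
    |>.rpow_const fun _ => .inl (lt_max_of_lt_right hε).ne').continuousOn.integrableOn_compact
    (isCompact_closedBall a b)

lemma setIntegral_max_norm_sub_rpow_pos {ε : ℝ} (hε : 0 < ε) (r : ℝ) (a : E) {b : ℝ}
    (hb : 0 < b) : 0 < ∫ x in closedBall a b, max ‖x - a‖ ε ^ r ∂μ := by
  rw [setIntegral_pos_iff_support_of_nonneg_ae (.of_forall fun x => by positivity)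
    (integrableOn_closedBall_max_norm_sub_rpow hε r a b)]
  have hsupp : Function.support (fun x => max ‖x - a‖ ε ^ r) = univ :=
    Function.support_eq_univ fun x => (rpow_pos_of_pos (lt_max_of_lt_right hε) r).ne'
  rw [hsupp, univ_inter]
  exact measure_closedBall_pos μ a hb

lemma setIntegral_max_norm_sub_rpow_le (hE : 1 ≤ Module.finrank ℝ E) {r : ℝ}
    (hr : -(Module.finrank ℝ E : ℝ) < r) (hr₀ : r ≤ 0) {ε : ℝ} (hε : 0 < ε) (a : E) (b : ℝ) :
    ∫ x in closedBall a b, max ‖x - a‖ ε ^ r ∂μ ≤ ∫ x in closedBall a b, ‖x - a‖ ^ r ∂μ := by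
  have : Nontrivial E := Module.nontrivial_of_finrank_pos (R := ℝ) hE
  refine setIntegral_mono_on_ae (integrableOn_closedBall_max_norm_sub_rpow hε r a b)
    (integrableOn_closedBall_norm_sub_rpow hE hr a b) measurableSet_closedBall ?_
  filter_upwards [Measure.ae_ne μ a] with x hx _
  exact rpow_le_rpow_of_nonpos (norm_pos_iff.2 (sub_ne_zero.2 hx)) (le_max_left _ _) hr₀

lemma inv_setIntegral_mul_rpow_le_normalizedPowerDensity (hE : 1 ≤ Module.finrank ℝ E) {r : ℝ}
    (hr : -(Module.finrank ℝ E : ℝ) < r) (hr₀ : r ≤ 0) {ε : ℝ} (hε : 0 < ε) {a : E} {b : ℝ}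
    (hb : 0 < b) {x : E} (hx : x ∈ closedBall a b) {t : ℝ} (ht : max ‖x - a‖ ε ≤ t) :
    (∫ y in closedBall a b, ‖y - a‖ ^ r ∂μ)⁻¹ * t ^ r
      ≤ normalizedPowerDensity μ (closedBall a b) (fun y => max ‖y - a‖ ε) r x := by
  have hI := setIntegral_max_norm_sub_rpow_pos (μ := μ) hε r a hb
  rw [normalizedPowerDensity, indicator_of_mem hx]
  exact mul_le_mul (inv_anti₀ hI (setIntegral_max_norm_sub_rpow_le hE hr hr₀ hε a b))
    (rpow_le_rpow_of_nonpos (lt_max_of_lt_right hε) ht hr₀)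
    (rpow_nonneg ((lt_max_of_lt_right hε).le.trans ht) r) (inv_nonneg.2 hI.le)

lemma mul_pow_le_prod_normalizedPowerDensity (hE : 1 ≤ Module.finrank ℝ E) {r : ℝ}
    (hr : -(Module.finrank ℝ E : ℝ) < r) (hr₀ : r ≤ 0) {ε b : ℝ} (hε : 0 < ε) (hεb : ε ≤ b)
    {ι : Type*} [Fintype ι] {X : ι → E} {a : E} (hX : ∀ i, X i ∈ closedBall a b) {i₀ : ι}
    (hi₀ : X i₀ = a) :
    (∫ y in closedBall a b, ‖y - a‖ ^ r ∂μ)⁻¹ * ε ^ r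
        * ((∫ y in closedBall a b, ‖y - a‖ ^ r ∂μ)⁻¹ * b ^ r) ^ (Fintype.card ι - 1)
      ≤ ∏ i, normalizedPowerDensity μ (closedBall a b) (fun y => max ‖y - a‖ ε) r (X i) := by
  have hb : 0 < b := hε.trans_le hεb
  have hI := (setIntegral_max_norm_sub_rpow_pos (μ := μ) hε r a hb).trans_le
    (setIntegral_max_norm_sub_rpow_le hE hr hr₀ hε a b)
  exact mul_pow_card_sub_one_le_prod (by positivity)
    (fun i => inv_setIntegral_mul_rpow_le_normalizedPowerDensity hE hr hr₀ hε hb (hX i)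
      (max_le (mem_closedBall_iff_norm.1 (hX i)) hεb)) i₀
    (inv_setIntegral_mul_rpow_le_normalizedPowerDensity hE hr hr₀ hε hb (hX i₀)
      (by simp [hi₀, hε.le]))

end TruncatedRadialPower

lemma isSConcaveDensity_truncated_norm_sub_rpow {d : ℕ} {s : ℝ} (hs : s < 0) (a : Fin d → ℝ)
    {b ε : ℝ} (hb : 0 < b) (hε : 0 < ε) :
    IsSConcaveDensity d s
      (normalizedPowerDensity volume (closedBall a b) (fun x => max ‖x - a‖ ε) (1 / s)) := by
  have hnorm : ConvexOn ℝ (closedBall a b) fun x => ‖x - a‖ := by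
    simpa only [dist_eq_norm] using convexOn_dist a (convex_closedBall a b)
  exact isSConcaveDensity_normalizedPowerDensity hs measurableSet_closedBall
    (hnorm.sup (convexOn_const ε (convex_closedBall a b))) (fun x _ => lt_max_of_lt_right hε)
    (by fun_prop) (setIntegral_max_norm_sub_rpow_pos hε _ a hb)

/-- for `s < -1/d` the `s`-concave maximum likelihood estimator does not exist:
for any observed points `X_1, …, X_n`, the likelihood is unbounded over the class of
`s`-concave densities, i.e. `sup_{p ∈ P_s} ∏_i p(X_i) = +∞`. -/
theorem stmt11 (d : ℕ) (hd : 1 ≤ d) (s : ℝ) (hs : s < -1 / (d : ℝ))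
    (n : ℕ) (hn : 0 < n) (X : Fin n → Fin d → ℝ) :
    ∀ M : ℝ, ∃ p : (Fin d → ℝ) → ℝ, IsSConcaveDensity d s p ∧ M < ∏ i, p (X i) := by
  intro M
  have hd₀ : (0 : ℝ) < d := by exact_mod_cast hd
  have hs₀ : s < 0 := hs.trans (div_neg_of_neg_of_pos (by norm_num) hd₀)
  have hE : 1 ≤ Module.finrank ℝ (Fin d → ℝ) := by simpa using hd
  have hr : -(Module.finrank ℝ (Fin d → ℝ) : ℝ) < 1 / s := by
    rw [Module.finrank_fin_fun, lt_div_iff_of_neg hs₀]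
    linarith [(lt_div_iff₀ hd₀).1 hs]
  have hr₀ : 1 / s < 0 := one_div_neg.2 hs₀
  let i₀ : Fin n := ⟨0, hn⟩
  obtain ⟨b, hb, hX⟩ : ∃ b > 0, ∀ i, X i ∈ closedBall (X i₀) b := by
    obtain ⟨R, hR⟩ := (finite_range X).isBounded.subset_closedBall (X i₀)
    exact ⟨max R 1, by positivity, fun i =>
      closedBall_subset_closedBall (le_max_left R 1) (hR (mem_range_self i))⟩
  set C := ∫ x in closedBall (X i₀) b, ‖x - X i₀‖ ^ (1 / s)
  have hC : 0 < C := (setIntegral_max_norm_sub_rpow_pos hb _ _ hb).trans_le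
    (setIntegral_max_norm_sub_rpow_le hE hr hr₀.le hb _ b)
  have hlim : Tendsto (fun ε => C⁻¹ * ε ^ (1 / s) * (C⁻¹ * b ^ (1 / s)) ^ (n - 1))
      (𝓝[>] 0) atTop :=
    ((tendsto_rpow_neg_nhdsGT_zero hr₀).const_mul_atTop (inv_pos.2 hC)).atTop_mul_const
      (by positivity)
  obtain ⟨ε, hM, hε, hεb⟩ := ((hlim.eventually_gt_atTop M).and (Ioo_mem_nhdsGT hb)).exists
  refine ⟨_, isSConcaveDensity_truncated_norm_sub_rpow hs₀ (X i₀) hb hε, hM.trans_le ?_⟩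
  simpa [C] using mul_pow_le_prod_normalizedPowerDensity hE hr hr₀.le hε hεb.le hX rfl
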